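/- arXiv:1106.0048 — 2 statements merged into one kernel-verified Lean document; each statement's English description precedes it below -/
import Mathlib

section
/- Let K be the Erdős–Rényi random graph G(n,p) with n ≥ 2 and p ∈ (0,1), let Y be its number of isolated vertices, and let V' be a vertex chosen uniformly at random from {1,...,n}, independent of K. Let K^s be the graph obtained from K by deleting all edges incident to V', and let Y^s be the number of isolated vertices of K^s. Then Y^s has the Y-size biased distribution, i.e., E[Y f(Y)] = μ E[f(Y^s)] for all bounded functions f, where μ = E Y = n(1-p)^{n-1}; moreover Y^s ≥ Y almost surely. -/
/-!
For a vertex `v`, the event `deg v = 0` depends only on the `n - 1` potential edges at `v`,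
the graph with the edges at `v` deleted depends only on the other edges, and the two graphs
agree on that event. Independence of the edge indicators therefore gives
`E[1(deg v = 0) f(Y)] = (1 - p)^(n-1) E[f(Y^v)]`, where `Y^v` counts the isolated vertices
after deleting the edges at `v`. Summing over `v` gives `E[Y f(Y)] = n (1 - p)^(n-1) E[f(Y^s)]`,
and `f = 1` gives `E[Y] = n (1 - p)^(n-1)`. Deleting edges keeps isolated vertices isolated,
so `Y ≤ Y^s`.
-/

open MeasureTheory ProbabilityTheory Real Finset

noncomputable section

namespace ErdosRenyiIsolated

/-- Index set for the potential edges of a graph on `Fin n`. -/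
abbrev EdgeIdx (n : ℕ) := {e : Fin n × Fin n // e.1 < e.2}

/-- Adjacency relation of the random graph encoded by `ω` : `u` and `v` are adjacent
if the corresponding edge indicator is `true`. -/
def adj {n : ℕ} (ω : EdgeIdx n → Bool) (u v : Fin n) : Prop :=
  if h : u < v then ω ⟨(u, v), h⟩ = true
  else if h' : v < u then ω ⟨(v, u), h'⟩ = true
  else False

instance {n : ℕ} (ω : EdgeIdx n → Bool) (u v : Fin n) : Decidable (adj ω u v) := by
  unfold adj
  split
  · exact inferInstance
  · split
    · exact inferInstance
    · exact inferInstance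

/-- Degree of vertex `v` in the graph encoded by `ω`. -/
def deg {n : ℕ} (ω : EdgeIdx n → Bool) (v : Fin n) : ℕ :=
  (Finset.univ.filter fun w => adj ω v w).card

/-- The number of isolated vertices of the graph encoded by `ω`. -/
def isolCount {n : ℕ} (ω : EdgeIdx n → Bool) : ℕ :=
  (Finset.univ.filter fun v => deg ω v = 0).card

/-- The Bernoulli(p) measure on `Bool`. -/
def bern (p : ℝ) : Measure Bool :=
  ENNReal.ofReal p • Measure.dirac true + ENNReal.ofReal (1 - p) • Measure.dirac false

instance (p : ℝ) : IsFiniteMeasure (bern p) := by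
  constructor
  have h : bern p Set.univ ≤ ENNReal.ofReal p + ENNReal.ofReal (1 - p) := by
    simp [bern]
  exact lt_of_le_of_lt h (ENNReal.add_lt_top.mpr ⟨ENNReal.ofReal_lt_top, ENNReal.ofReal_lt_top⟩)

/-- The Erdős–Rényi random graph measure `G(n,p)`: the edge indicators are i.i.d.
Bernoulli(p). -/
def gnp (n : ℕ) (p : ℝ) : Measure (EdgeIdx n → Bool) :=
  Measure.pi fun _ => bern p

/-- The Erdős–Rényi measure together with an independent uniformly chosen vertex. -/
def gnpV (n : ℕ) (p : ℝ) : Measure ((EdgeIdx n → Bool) × Fin n) :=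
  (gnp n p).prod (uniformOn (Set.univ : Set (Fin n)))

/-- Adjacency in the graph obtained by deleting all edges incident to `v'`. -/
def adjDel {n : ℕ} (ω : EdgeIdx n → Bool) (v' u v : Fin n) : Prop :=
  adj ω u v ∧ u ≠ v' ∧ v ≠ v'

instance {n : ℕ} (ω : EdgeIdx n → Bool) (v' u v : Fin n) : Decidable (adjDel ω v' u v) := by
  unfold adjDel; exact inferInstance

/-- Degree of `v` in the graph `ω` with all edges incident to `v'` deleted. -/
def degDel {n : ℕ} (ω : EdgeIdx n → Bool) (v' v : Fin n) : ℕ :=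
  (Finset.univ.filter fun w => adjDel ω v' v w).card

/-- Number of isolated vertices in the graph `ω` with all edges incident to `v'` deleted. -/
def isolCountDel {n : ℕ} (ω : EdgeIdx n → Bool) (v' : Fin n) : ℕ :=
  (Finset.univ.filter fun v => degDel ω v' v = 0).card

section ProductWeights

variable {ι α : Type*} [Fintype ι] [DecidableEq ι] [Fintype α] (q : α → ℝ)
  (P : ι → Prop) [DecidablePred P]

theorem sum_prod_eq_one (hq : ∑ a, q a = 1) : ∑ ω : ι → α, ∏ i, q (ω i) = 1 := by
  rw [← Fintype.prod_sum, hq, prod_const_one]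

theorem sum_prod_mul_eq_sum_sum_piEquivPiSubtypeProd (F : (ι → α) → ℝ) :
    ∑ ω : ι → α, (∏ i, q (ω i)) * F ω =
      ∑ a : {i // P i} → α, ∑ b : {i // ¬P i} → α,
        (∏ i, q (a i)) * (∏ i, q (b i)) *
          F ((Equiv.piEquivPiSubtypeProd P fun _ => α).symm (a, b)) := by
  rw [← (Equiv.piEquivPiSubtypeProd P fun _ => α).symm.sum_comp, Fintype.sum_prod_type]
  refine Finset.sum_congr rfl fun a _ => Finset.sum_congr rfl fun b _ => ?_
  rw [← Fintype.prod_subtype_mul_prod_subtype P]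
  congr 2 <;> refine Finset.prod_congr rfl fun i _ => ?_ <;> simp [i.2]

/-- The coordinates in `P` are independent of the others, so conditioning them to equal `c`
amounts to overwriting them by `c`. -/
theorem sum_prod_mul_ite_forall_eq [DecidableEq α] (c : α) (hq : ∑ a, q a = 1)
    (h : (ι → α) → ℝ) :
    ∑ ω : ι → α, (∏ i, q (ω i)) * (if ∀ i, P i → ω i = c then h ω else 0) =
      q c ^ Fintype.card {i // P i} *
        ∑ ω : ι → α, (∏ i, q (ω i)) * h (fun i => if P i then c else ω i) := by
  rw [sum_prod_mul_eq_sum_sum_piEquivPiSubtypeProd q P,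
    sum_prod_mul_eq_sum_sum_piEquivPiSubtypeProd q P]
  set Φ := (Equiv.piEquivPiSubtypeProd P fun _ => α).symm
  have hfrozen (a b) : (∀ i, P i → Φ (a, b) i = c) ↔ a = fun _ => c := by
    simp only [funext_iff, Subtype.forall]
    exact forall_congr' fun i => forall_congr' fun hi => by simp [Φ, hi]
  have hfreeze (a b) : (fun i => if P i then c else Φ (a, b) i) = Φ (fun _ => c, b) := by
    ext i; by_cases hi : P i <;> simp [Φ, hi]
  simp_rw [hfrozen, hfreeze, mul_ite, mul_zero, Finset.sum_ite_irrel, Finset.sum_const_zero,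
    Fintype.sum_ite_eq', mul_assoc, ← Finset.mul_sum, ← Finset.sum_mul,
    sum_prod_eq_one q hq, one_mul, prod_const, card_univ]

end ProductWeights

section RandomGraph

variable {n : ℕ}

def bernWeight (p : ℝ) (b : Bool) : ℝ := if b then p else 1 - p

def graphWeight (p : ℝ) (ω : EdgeIdx n → Bool) : ℝ := ∏ e, bernWeight p (ω e)

theorem sum_bernWeight (p : ℝ) : ∑ b, bernWeight p b = 1 := by simp [bernWeight]

theorem bern_singleton (p : ℝ) (b : Bool) : bern p {b} = ENNReal.ofReal (bernWeight p b) := by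
  cases b <;> simp [bern, bernWeight]

theorem isProbabilityMeasure_bern {p : ℝ} (hp0 : 0 ≤ p) (hp1 : p ≤ 1) :
    IsProbabilityMeasure (bern p) := by
  refine ⟨?_⟩
  simp [bern, ← ENNReal.ofReal_add hp0 (sub_nonneg.2 hp1)]

instance (p : ℝ) : IsFiniteMeasure (gnp n p) := by
  unfold gnp
  infer_instance

theorem isProbabilityMeasure_gnpV (hn : 0 < n) {p : ℝ} (hp0 : 0 ≤ p) (hp1 : p ≤ 1) :
    IsProbabilityMeasure (gnpV n p) := by
  have := isProbabilityMeasure_bern hp0 hp1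
  have : Nonempty (Fin n) := ⟨⟨0, hn⟩⟩
  have := isProbabilityMeasure_uniformOn (Set.finite_univ (α := Fin n)) Set.univ_nonempty
  unfold gnpV gnp
  infer_instance

theorem gnp_singleton (p : ℝ) (ω : EdgeIdx n → Bool) :
    gnp n p {ω} = ∏ e, ENNReal.ofReal (bernWeight p (ω e)) := by
  rw [← Set.univ_pi_singleton, gnp, Measure.pi_pi]
  simp only [bern_singleton]

theorem integral_gnp {p : ℝ} (hp0 : 0 ≤ p) (hp1 : p ≤ 1)
    (g : (EdgeIdx n → Bool) → ℝ) :
    ∫ ω, g ω ∂gnp n p = ∑ ω, graphWeight p ω * g ω := by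
  have hw (b : Bool) : 0 ≤ bernWeight p b := by
    cases b <;> simp [bernWeight, hp0, hp1]
  rw [integral_fintype .of_finite]
  refine sum_congr rfl fun ω _ => ?_
  rw [measureReal_def, gnp_singleton, ← ENNReal.ofReal_prod_of_nonneg fun e _ => hw (ω e),
    ENNReal.toReal_ofReal (prod_nonneg fun e _ => hw (ω e)), smul_eq_mul, graphWeight]

theorem integral_gnpV (hn : 0 < n) {p : ℝ} (hp0 : 0 ≤ p) (hp1 : p ≤ 1)
    (g : (EdgeIdx n → Bool) × Fin n → ℝ) :
    ∫ x, g x ∂gnpV n p = (n : ℝ)⁻¹ * ∑ v, ∑ ω, graphWeight p ω * g (ω, v) := by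
  have : Nonempty (Fin n) := ⟨⟨0, hn⟩⟩
  have := isProbabilityMeasure_uniformOn (Set.finite_univ (α := Fin n)) Set.univ_nonempty
  rw [gnpV, integral_prod_symm g .of_finite, integral_fintype .of_finite, mul_sum]
  refine sum_congr rfl fun v _ => ?_
  rw [← integral_gnp hp0 hp1]
  simp [measureReal_def, uniformOn_univ]

def incident (v : Fin n) (e : EdgeIdx n) : Prop := e.1.1 = v ∨ e.1.2 = v

instance (v : Fin n) : DecidablePred (incident v) := fun _ => instDecidableOr

def deleteIncident (v : Fin n) (ω : EdgeIdx n → Bool) : EdgeIdx n → Bool :=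
  fun e => if incident v e then false else ω e

theorem card_incident (v : Fin n) :
    Fintype.card {e : EdgeIdx n // incident v e} = n - 1 := by
  have hdisj : Disjoint (fun e : EdgeIdx n => e.1.1 = v) (fun e => e.1.2 = v) :=
    disjoint_iff_inf_le.2 fun e ⟨h1, h2⟩ => e.2.ne (h1.trans h2.symm)
  have hleft : Fintype.card {e : EdgeIdx n // e.1.1 = v} = n - 1 - v :=
    calc _ = Fintype.card {u // v < u} := Fintype.card_congr
            { toFun := fun e => ⟨e.1.1.2, by simpa [← e.2] using e.1.2⟩
              invFun := fun u => ⟨⟨(v, u), u.2⟩, rfl⟩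
              left_inv := by rintro ⟨⟨⟨a, b⟩, h⟩, rfl⟩; rfl
              right_inv := fun u => rfl }
      _ = n - 1 - v := by rw [Fintype.card_subtype, filter_lt_eq_Ioi, Fin.card_Ioi]
  have hright : Fintype.card {e : EdgeIdx n // e.1.2 = v} = v :=
    calc _ = Fintype.card {u // u < v} := Fintype.card_congr
            { toFun := fun e => ⟨e.1.1.1, by simpa [← e.2] using e.1.2⟩
              invFun := fun u => ⟨⟨(u, v), u.2⟩, rfl⟩
              left_inv := by rintro ⟨⟨⟨a, b⟩, h⟩, rfl⟩; rfl
              right_inv := fun u => rfl }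
      _ = v := by rw [Fintype.card_subtype, filter_gt_eq_Iio, Fin.card_Iio]
  unfold incident
  rw [Fintype.card_subtype_or_disjoint _ _ hdisj, hleft, hright]
  omega

theorem deg_eq_zero_iff (ω : EdgeIdx n → Bool) (v : Fin n) :
    deg ω v = 0 ↔ ∀ e, incident v e → ω e = false := by
  simp only [deg, card_eq_zero, filter_eq_empty_iff, mem_univ, true_implies]
  constructor
  · rintro h ⟨⟨a, b⟩, hab⟩ (rfl | rfl)
    · simpa [adj, hab] using @h b
    · simpa [adj, hab, not_lt_of_gt hab] using @h a
  · intro h w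
    unfold adj
    split_ifs with h1 h2
    · simpa using h ⟨(v, w), h1⟩ (Or.inl rfl)
    · simpa using h ⟨(w, v), h2⟩ (Or.inr rfl)
    · exact id

theorem adj_deleteIncident (ω : EdgeIdx n → Bool) (v' u v : Fin n) :
    adj (deleteIncident v' ω) u v ↔ adjDel ω v' u v := by
  unfold adjDel adj deleteIncident incident
  split_ifs <;> grind

theorem isolCountDel_eq_isolCount_deleteIncident (ω : EdgeIdx n → Bool) (v' : Fin n) :
    isolCountDel ω v' = isolCount (deleteIncident v' ω) := by
  simp only [isolCountDel, isolCount, degDel, deg, adj_deleteIncident]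
  congr!

theorem isolCount_le_isolCountDel (ω : EdgeIdx n → Bool) (v' : Fin n) :
    isolCount ω ≤ isolCountDel ω v' := by
  refine card_le_card (monotone_filter_right _ fun u _ (hu : deg ω u = 0) => ?_)
  exact Nat.eq_zero_of_le_zero (hu ▸ card_le_card (monotone_filter_right _ fun w _ h => h.1))

theorem cast_isolCount_mul (ω : EdgeIdx n → Bool) (c : ℝ) :
    (isolCount ω : ℝ) * c = ∑ v, if deg ω v = 0 then c else 0 := by
  simp [isolCount, sum_ite]

theorem sum_graphWeight_mul_ite_deg_eq_zero (p : ℝ) (v : Fin n)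
    (h : (EdgeIdx n → Bool) → ℝ) :
    ∑ ω, graphWeight p ω * (if deg ω v = 0 then h ω else 0) =
      (1 - p) ^ (n - 1) * ∑ ω, graphWeight p ω * h (deleteIncident v ω) := by
  simp_rw [graphWeight, deg_eq_zero_iff]
  rw [sum_prod_mul_ite_forall_eq _ (incident v) false (sum_bernWeight p), card_incident]
  rfl

theorem integral_isolCount_mul (hn : 0 < n) {p : ℝ} (hp0 : 0 ≤ p) (hp1 : p ≤ 1)
    (f : ℝ → ℝ) :
    ∫ ω, (isolCount ω : ℝ) * f (isolCount ω) ∂gnp n p =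
      n * (1 - p) ^ (n - 1) * ∫ x, f (isolCountDel x.1 x.2) ∂gnpV n p := by
  calc ∫ ω, (isolCount ω : ℝ) * f (isolCount ω) ∂gnp n p
      = ∑ v, ∑ ω, graphWeight p ω * (if deg ω v = 0 then f (isolCount ω) else 0) := by
        simp_rw [integral_gnp hp0 hp1, cast_isolCount_mul, mul_sum]
        exact sum_comm
    _ = ∑ v : Fin n, (1 - p) ^ (n - 1) * ∑ ω, graphWeight p ω * f (isolCountDel ω v) := by
        simp only [sum_graphWeight_mul_ite_deg_eq_zero, isolCountDel_eq_isolCount_deleteIncident]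
    _ = _ := by
        rw [integral_gnpV hn hp0 hp1, ← mul_sum]
        field_simp

end RandomGraph

/-- deleting all edges incident to an independent uniformly chosen vertex
produces a size biased version of the number of isolated vertices, and the coupling is
monotone. -/
theorem size_bias_coupling_isolated (n : ℕ) (hn : 2 ≤ n) (p : ℝ)
    (hp : p ∈ Set.Ioo (0 : ℝ) 1)
    (μ : ℝ) (hμ : μ = (n : ℝ) * (1 - p) ^ (n - 1)) :
    (∫ ω, (isolCount ω : ℝ) ∂(gnp n p)) = μ ∧
    (∀ f : ℝ → ℝ, Measurable f → (∃ C, ∀ x, |f x| ≤ C) →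
      ∫ ω, (isolCount ω : ℝ) * f (isolCount ω) ∂(gnp n p)
        = μ * ∫ x, f (isolCountDel x.1 x.2) ∂(gnpV n p)) ∧
    (∀ᵐ x ∂(gnpV n p), (isolCount x.1 : ℝ) ≤ (isolCountDel x.1 x.2 : ℝ)) := by
  obtain ⟨hp0, hp1⟩ := hp
  have hn0 : 0 < n := by omega
  have hsize_bias (f : ℝ → ℝ) := hμ ▸ integral_isolCount_mul hn0 hp0.le hp1.le f
  have := isProbabilityMeasure_gnpV hn0 hp0.le hp1.le
  refine ⟨by simpa using hsize_bias fun _ => 1, fun f _ _ => hsize_bias f, ?_⟩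
  exact .of_forall fun x => by exact_mod_cast isolCount_le_isolCountDel x.1 x.2

end ErdosRenyiIsolated
end
end

section
/- Let K be the Erdős–Rényi random graph G(n,p) with n ≥ 2 and p ∈ (0,1), let V' be a vertex chosen uniformly at random independent of K, let Y be the number of isolated vertices of K and Y^s the number of isolated vertices of the graph obtained by deleting all edges incident to V'. Then the conditional expectation satisfies E(Y^s − Y | K) ≤ 2 almost surely. -/
open MeasureTheory ProbabilityTheory Real Finset

noncomputable section

namespace ErdosRenyiIsolated

/-
Deleting the edges at `V'` can only create new isolated vertices at `V'` itself and at the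
leaves hanging off `V'`. A leaf hangs off exactly one vertex, so averaging over `V'` the number of
new isolated vertices is at most `1 + (number of leaves) / n ≤ 2`. Since `V'` is independent of
`K`, the conditional expectation given `K` is exactly this average over `V'`.
-/

section Integrals

variable {E : Type*} [NormedAddCommGroup E] [NormedSpace ℝ E] [CompleteSpace E]

theorem condExp_comap_fst_prod_ae_eq {α β : Type*} [MeasurableSpace α] [MeasurableSpace β]
    {μ : Measure α} {ν : Measure β} [IsFiniteMeasure μ] [IsProbabilityMeasure ν]
    {f : α × β → E} (hf : Integrable f (μ.prod ν)) (hfm : StronglyMeasurable f) :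
    (μ.prod ν)[f | MeasurableSpace.comap Prod.fst inferInstance] =ᵐ[μ.prod ν]
      fun x => ∫ y, f (x.1, y) ∂ν := by
  have hg : Integrable (fun x : α × β => ∫ y, f (x.1, y) ∂ν) (μ.prod ν) :=
    hf.integral_prod_left.comp_fst ν
  refine (ae_eq_condExp_of_forall_setIntegral_eq measurable_fst.comap_le hf
    (fun _ _ _ => hg.integrableOn) ?_ ?_).symm
  · rintro _ ⟨t, -, rfl⟩ -
    rw [← Set.prod_univ, setIntegral_prod _ hg.integrableOn, setIntegral_prod _ hf.integrableOn]
    simp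
  · exact (hfm.integral_prod_right'.comp_measurable
      (Measurable.of_comap_le le_rfl)).aestronglyMeasurable

theorem integral_uniformOn_univ {Ω : Type*} [MeasurableSpace Ω] [MeasurableSingletonClass Ω]
    [Fintype Ω] (f : Ω → E) :
    ∫ ω, f ω ∂uniformOn Set.univ = (Fintype.card Ω : ℝ)⁻¹ • ∑ ω, f ω := by
  simp [uniformOn, ProbabilityTheory.cond, integral_smul_measure]

end Integrals

section Combinatorics

variable {n : ℕ} (ω : EdgeIdx n → Bool)

def pendantNeighbors (v' : Fin n) : Finset (Fin n) :=
  {v | deg ω v = 1 ∧ adj ω v v'}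

lemma neighbors_subset_singleton_of_degDel_eq_zero {v' v : Fin n} (hv : v ≠ v')
    (h : degDel ω v' v = 0) : ({w | adj ω v w} : Finset (Fin n)) ⊆ {v'} := by
  intro w hw
  rw [degDel, card_eq_zero, filter_eq_empty_iff] at h
  by_contra hw'
  exact h (mem_univ w) ⟨(mem_filter.1 hw).2, hv, mem_singleton.not.1 hw'⟩

lemma mem_pendantNeighbors_of_degDel_eq_zero {v' v : Fin n} (hv : v ≠ v')
    (h : degDel ω v' v = 0) (hd : deg ω v ≠ 0) : v ∈ pendantNeighbors ω v' := by
  rcases subset_singleton_iff.1 (neighbors_subset_singleton_of_degDel_eq_zero ω hv h) with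
    hnone | hone
  · exact absurd (by rw [deg, hnone, card_empty]) hd
  · have hadj : adj ω v v' := (mem_filter.1 (hone ▸ mem_singleton_self v')).2
    exact mem_filter.2 ⟨mem_univ v, by rw [deg, hone, card_singleton], hadj⟩

lemma filter_degDel_eq_zero_subset (v' : Fin n) :
    ({v | degDel ω v' v = 0} : Finset (Fin n)) ⊆
      (({v | deg ω v = 0} : Finset (Fin n)) ∪ {v'}) ∪ pendantNeighbors ω v' := by
  intro v hv
  by_cases hd : deg ω v = 0
  · simp [hd]
  by_cases hv' : v = v'
  · simp [hv']
  exact mem_union_right _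
    (mem_pendantNeighbors_of_degDel_eq_zero ω hv' (mem_filter.1 hv).2 hd)

lemma isolCountDel_le (v' : Fin n) :
    isolCountDel ω v' ≤ isolCount ω + 1 + #(pendantNeighbors ω v') :=
  calc isolCountDel ω v'
      ≤ #((({v | deg ω v = 0} : Finset (Fin n)) ∪ {v'}) ∪ pendantNeighbors ω v') :=
        card_le_card (filter_degDel_eq_zero_subset ω v')
    _ ≤ #(({v | deg ω v = 0} : Finset (Fin n)) ∪ {v'}) + #(pendantNeighbors ω v') :=
        card_union_le _ _
    _ ≤ isolCount ω + 1 + #(pendantNeighbors ω v') := by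
        gcongr
        exact (card_union_le _ _).trans_eq (by rw [card_singleton, isolCount])

lemma card_filter_deg_eq_one_and_adj_le_one (v : Fin n) :
    #({v' | deg ω v = 1 ∧ adj ω v v'} : Finset (Fin n)) ≤ 1 := by
  by_cases hd : deg ω v = 1
  · simp only [hd, true_and]
    exact hd.le
  · simp [hd]

lemma sum_card_pendantNeighbors_le : ∑ v', #(pendantNeighbors ω v') ≤ n := by
  have hcount := sum_card_bipartiteAbove_eq_sum_card_bipartiteBelow
    (fun v v' => deg ω v = 1 ∧ adj ω v v') (s := univ) (t := univ)
  calc ∑ v', #(pendantNeighbors ω v')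
      = ∑ v, #({v' | deg ω v = 1 ∧ adj ω v v'} : Finset (Fin n)) := hcount.symm
    _ ≤ ∑ _v : Fin n, 1 := sum_le_sum fun v _ => card_filter_deg_eq_one_and_adj_le_one ω v
    _ = n := by simp

lemma sum_isolCountDel_le : ∑ v', isolCountDel ω v' ≤ n * isolCount ω + 2 * n :=
  calc ∑ v', isolCountDel ω v'
      ≤ ∑ v', (isolCount ω + 1 + #(pendantNeighbors ω v')) :=
        sum_le_sum fun v' _ => isolCountDel_le ω v'
    _ = n * (isolCount ω + 1) + ∑ v', #(pendantNeighbors ω v') := by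
        simp [sum_add_distrib, add_comm, mul_add]
    _ ≤ n * isolCount ω + 2 * n := by linarith [sum_card_pendantNeighbors_le ω]

lemma average_isolCountDel_sub_isolCount_le_two [NeZero n] :
    (n : ℝ)⁻¹ * ∑ v', ((isolCountDel ω v' : ℝ) - isolCount ω) ≤ 2 := by
  have hsum : (∑ v', isolCountDel ω v' : ℝ) ≤ n * isolCount ω + 2 * n := by
    exact_mod_cast sum_isolCountDel_le ω
  rw [inv_mul_le_iff₀ (Nat.cast_pos.2 (NeZero.pos n)), sum_sub_distrib, sum_const, card_univ,
    Fintype.card_fin, nsmul_eq_mul]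
  linarith

end Combinatorics

theorem condexp_size_bias_diff_le_two_general (n : ℕ) (hn : 2 ≤ n) (p : ℝ) :
    ∀ᵐ x ∂(gnpV n p),
      (MeasureTheory.condExp (MeasurableSpace.comap Prod.fst inferInstance) (gnpV n p)
        fun x => (isolCountDel x.1 x.2 : ℝ) - (isolCount x.1 : ℝ)) x ≤ 2 := by
  have : NeZero n := ⟨by omega⟩
  have : IsProbabilityMeasure (uniformOn (Set.univ : Set (Fin n))) :=
    isProbabilityMeasure_uniformOn Set.finite_univ Set.univ_nonempty
  have : IsFiniteMeasure (gnp n p) := by unfold gnp; infer_instance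
  have hcond := condExp_comap_fst_prod_ae_eq (μ := gnp n p) (ν := uniformOn Set.univ)
    (f := fun x => (isolCountDel x.1 x.2 : ℝ) - isolCount x.1) Integrable.of_finite
    (measurable_of_countable _).stronglyMeasurable
  filter_upwards [hcond] with x hx
  rw [gnpV, hx, integral_uniformOn_univ, Fintype.card_fin, smul_eq_mul]
  exact average_isolCountDel_sub_isolCount_le_two x.1

/-- the conditional expectation of `Y^s - Y` given the graph `K` is at most
`2` almost surely. -/
theorem condexp_size_bias_diff_le_two (n : ℕ) (hn : 2 ≤ n) (p : ℝ)
    (hp : p ∈ Set.Ioo (0 : ℝ) 1) :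
    ∀ᵐ x ∂(gnpV n p),
      (MeasureTheory.condExp (MeasurableSpace.comap Prod.fst inferInstance) (gnpV n p)
        fun x => (isolCountDel x.1 x.2 : ℝ) - (isolCount x.1 : ℝ)) x ≤ 2 :=
  condexp_size_bias_diff_le_two_general n hn p

end ErdosRenyiIsolated
end
end
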